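/- Let γ ≥ 0 and α ∈ [γ, 7γ/6]. Then there exist δ ∈ [0,1] and block-rotation matrices k, k' ∈ SO(3) of the form diag(R,1) with R ∈ SO(2) (rotation in the first two coordinates) such that D_{2γ−α} x_δ D_α = k · diag(e^γ, 1, e^{−γ}) · k', where D_β = diag(e^β, e^{−β/2}, e^{−β/2}) and x_δ is the rotation with first column (δ, √(1−δ²), 0), second column (−√(1−δ²), δ, 0), third column (0,0,1). Moreover δ ≤ e^{−γ}, ‖k − I‖ ≤ 2e^{−γ/4}, and ‖k' − I‖ ≤ 2e^{−γ/4}. -/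

import Mathlib

/-
The upper-left `2 × 2` block `B = !![a, -b; c, d]` of `D_{2γ-α} x_δ D_α` has determinant
`T = e^γ`, so it has the form `R(θ) diag(T, 1) R(θ')` exactly when `‖B‖²_F = T² + 1`.
This condition is linear in `δ²` and fixes `δ`; in the variables `t = e^{γ/4}` and
`u = e^{3α/2 - γ}` (where `γ ≤ α ≤ 7γ/6` reads `t² ≤ u ≤ t³`) the bound `δ ≤ e^{-γ}`
becomes a polynomial inequality. Writing `diag(T, 1) = (T+1)/2 · I + (T-1)/2 · diag(1, -1)`,
the rotations are found from `(a + d, c + b) = (T + 1)(cos φ, sin φ)` and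
`(a - d, c - b) = (T - 1)(cos ψ, sin ψ)` with `θ = (φ + ψ)/2`, `θ' = (φ - ψ)/2`.
Finally `‖R(θ) - I‖ = 2|sin(θ/2)|`, and for `φ, ψ ∈ [0, π/2]` both `2 sin((φ + ψ)/4)` and
`2|sin((φ - ψ)/4)|` are at most `sin φ + sin ψ`, which the explicit entries of `B` bound
by `2e^{-γ/4}`.
-/

open Real

/-- The operator norm of a `3×3` real matrix acting on Euclidean `ℝ³`. -/
noncomputable def opNorm3 (g : Matrix (Fin 3) (Fin 3) ℝ) : ℝ :=
  ‖LinearMap.toContinuousLinearMap (Matrix.toEuclideanLin (𝕜 := ℝ) g)‖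

/-- `D_β = diag(e^β, e^{−β/2}, e^{−β/2})`. -/
noncomputable def Dmat (β : ℝ) : Matrix (Fin 3) (Fin 3) ℝ :=
  Matrix.diagonal ![exp β, exp (-β / 2), exp (-β / 2)]

/-- The rotation `x_δ` with first column `(δ, √(1−δ²), 0)`. -/
noncomputable def xmat (δ : ℝ) : Matrix (Fin 3) (Fin 3) ℝ :=
  !![δ, -sqrt (1 - δ ^ 2), 0;
     sqrt (1 - δ ^ 2), δ, 0;
     0, 0, 1]

/-- The block rotation `diag(R(θ),1) ∈ SO(3)` (an element of `Ũ`). -/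
noncomputable def rotU (θ : ℝ) : Matrix (Fin 3) (Fin 3) ℝ :=
  !![cos θ, -sin θ, 0;
     sin θ, cos θ, 0;
     0, 0, 1]

open Matrix Set

lemma opNorm3_rotU_sub_one_le (θ : ℝ) : opNorm3 (rotU θ - 1) ≤ 2 * |sin (θ / 2)| := by
  refine ContinuousLinearMap.opNorm_le_bound _ (by positivity) fun x => ?_
  have hcos : cos θ = 1 - 2 * sin (θ / 2) ^ 2 := by
    have h := cos_two_mul (θ / 2)
    rw [show 2 * (θ / 2) = θ by ring] at h
    linarith [cos_sq_add_sin_sq (θ / 2)]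
  refine le_of_pow_le_pow_left₀ two_ne_zero (by positivity) ?_
  rw [mul_pow, mul_pow, sq_abs, EuclideanSpace.norm_sq_eq, EuclideanSpace.norm_sq_eq]
  simp [rotU, toLpLin_apply, dotProduct, Fin.sum_univ_three]
  nlinarith [sin_sq_add_cos_sq θ, mul_nonneg (sq_nonneg (sin (θ / 2))) (sq_nonneg (x 2))]

lemma sqrt_two_div_two_le_cos {x : ℝ} (hx : |x| ≤ π / 4) : √2 / 2 ≤ cos x := by
  rw [← cos_pi_div_four, ← cos_abs x]
  exact cos_le_cos_of_nonneg_of_le_pi (abs_nonneg x) (by linarith [pi_pos]) hx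

lemma two_mul_sin_quarter_le_sin_add_sin {φ ψ : ℝ} (hφ : φ ∈ Icc 0 (π / 2))
    (hψ : ψ ∈ Icc 0 (π / 2)) : 2 * sin ((φ + ψ) / 4) ≤ sin φ + sin ψ := by
  obtain ⟨hφ0, hφ1⟩ := hφ
  obtain ⟨hψ0, hψ1⟩ := hψ
  have hsin : sin ((φ + ψ) / 2) = 2 * sin ((φ + ψ) / 4) * cos ((φ + ψ) / 4) := by
    rw [← sin_two_mul]; ring_nf
  have h0 : 0 ≤ sin ((φ + ψ) / 4) := sin_nonneg_of_nonneg_of_le_pi (by linarith) (by linarith)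
  have h1 := sqrt_two_div_two_le_cos (x := (φ + ψ) / 4) (abs_le.mpr ⟨by linarith, by linarith⟩)
  have h2 := sqrt_two_div_two_le_cos (x := (φ - ψ) / 2) (abs_le.mpr ⟨by linarith, by linarith⟩)
  have hc : 1 / 2 ≤ cos ((φ + ψ) / 4) * cos ((φ - ψ) / 2) := by
    have := mul_le_mul h1 h2 (by positivity) ((show (0:ℝ) ≤ √2 / 2 by positivity).trans h1)
    nlinarith [sq_sqrt (show (0:ℝ) ≤ 2 by norm_num)]
  rw [sin_add_sin, hsin]
  nlinarith [mul_le_mul_of_nonneg_left hc h0]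

lemma opNorm3_rotU_sub_one_le_sin_add_sin {φ ψ θ : ℝ} (hφ : φ ∈ Icc 0 (π / 2))
    (hψ : ψ ∈ Icc 0 (π / 2)) (hθ : |θ| ≤ (φ + ψ) / 2) :
    opNorm3 (rotU θ - 1) ≤ sin φ + sin ψ := by
  have hsum : (φ + ψ) / 4 ≤ π / 4 := by linarith [hφ.2, hψ.2]
  obtain ⟨hθ0, hθ1⟩ := abs_le.mp hθ
  have hsin : |sin (θ / 2)| ≤ sin ((φ + ψ) / 4) := by
    rw [abs_le, ← sin_neg]
    constructor <;>
      exact sin_le_sin_of_le_of_le_pi_div_two (by linarith [pi_pos]) (by linarith) (by linarith)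
  calc opNorm3 (rotU θ - 1) ≤ 2 * |sin (θ / 2)| := opNorm3_rotU_sub_one_le θ
    _ ≤ 2 * sin ((φ + ψ) / 4) := by gcongr
    _ ≤ sin φ + sin ψ := two_mul_sin_quarter_le_sin_add_sin hφ hψ

lemma exists_angle_of_sq_add_sq {x y ρ : ℝ} (hx : 0 ≤ x) (hy : 0 ≤ y) (hρ : 0 ≤ ρ)
    (h : x ^ 2 + y ^ 2 = ρ ^ 2) : ∃ φ ∈ Icc 0 (π / 2), ρ * cos φ = x ∧ ρ * sin φ = y := by
  set z : ℂ := ⟨x, y⟩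
  have hz : ‖z‖ = ρ := by
    rw [Complex.norm_def, Complex.normSq_apply, ← sq, ← sq, h, sqrt_sq hρ]
  refine ⟨z.arg, ⟨Complex.arg_nonneg_iff.mpr hy, Complex.arg_le_pi_div_two_iff.mpr (.inl hx)⟩,
    ?_, ?_⟩
  · rw [← hz, Complex.norm_mul_cos_arg]
  · rw [← hz, Complex.norm_mul_sin_arg]

lemma rotU_mul_diagonal_mul_rotU (θ θ' T S : ℝ) :
    rotU θ * diagonal ![T, 1, S] * rotU θ' =
      !![((T + 1) * cos (θ + θ') + (T - 1) * cos (θ - θ')) / 2,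
          -((T + 1) * sin (θ + θ') - (T - 1) * sin (θ - θ')) / 2, 0;
        ((T + 1) * sin (θ + θ') + (T - 1) * sin (θ - θ')) / 2,
          ((T + 1) * cos (θ + θ') - (T - 1) * cos (θ - θ')) / 2, 0;
        0, 0, S] := by
  ext i j
  fin_cases i <;> fin_cases j <;>
    simp [rotU, mul_apply, vecMul_diagonal, Fin.sum_univ_three, cos_add, cos_sub, sin_add,
      sin_sub] <;> ring

lemma exists_rotU_mul_diagonal_mul_rotU {T a b c d : ℝ} (S : ℝ) (hT : 1 ≤ T) (hda : |d| ≤ a)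
    (hbc : |b| ≤ c) (hdet : a * d + b * c = T)
    (hfrob : a ^ 2 + b ^ 2 + c ^ 2 + d ^ 2 = T ^ 2 + 1) :
    ∃ φ ∈ Icc 0 (π / 2), ∃ ψ ∈ Icc 0 (π / 2),
      rotU ((φ + ψ) / 2) * diagonal ![T, 1, S] * rotU ((φ - ψ) / 2) =
        !![a, -b, 0; c, d, 0; 0, 0, S] ∧
      (T + 1) * sin φ = c + b ∧ (T - 1) * sin ψ = c - b := by
  obtain ⟨hda₁, hda₂⟩ := abs_le.mp hda
  obtain ⟨hbc₁, hbc₂⟩ := abs_le.mp hbc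
  obtain ⟨φ, hφ, hcφ, hsφ⟩ := exists_angle_of_sq_add_sq (x := a + d) (y := c + b)
    (ρ := T + 1) (by linarith) (by linarith) (by linarith)
    (by linear_combination hfrob + 2 * hdet)
  obtain ⟨ψ, hψ, hcψ, hsψ⟩ := exists_angle_of_sq_add_sq (x := a - d) (y := c - b)
    (ρ := T - 1) (by linarith) (by linarith) (by linarith)
    (by linear_combination hfrob - 2 * hdet)
  refine ⟨φ, hφ, ψ, hψ, ?_, hsφ, hsψ⟩
  rw [rotU_mul_diagonal_mul_rotU, show (φ + ψ) / 2 + (φ - ψ) / 2 = φ by ring,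
    show (φ + ψ) / 2 - (φ - ψ) / 2 = ψ by ring, hcφ, hsφ, hcψ, hsψ]
  ext i j
  fin_cases i <;> fin_cases j <;> simp

lemma Dmat_mul_xmat_mul_Dmat (β β' δ : ℝ) :
    Dmat β * xmat δ * Dmat β' =
      !![exp (β + β') * δ, -(exp (β - β' / 2) * √(1 - δ ^ 2)), 0;
        exp (β' - β / 2) * √(1 - δ ^ 2), exp (-(β + β') / 2) * δ, 0;
        0, 0, exp (-(β + β') / 2)] := by
  ext i j
  fin_cases i <;> fin_cases j <;>
    simp [Dmat, xmat, mul_apply, Fin.sum_univ_three] <;>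
    simp only [mul_right_comm _ _ (exp _), ← exp_add] <;> ring_nf

section

variable {t u : ℝ}

lemma pow_five_mul_sq_sub_one_le (ht : 1 ≤ t) (htu : t ^ 2 ≤ u) (hut : u ≤ t ^ 3) :
    t ^ 5 * (u ^ 2 - 1) ≤ u * (t ^ 8 - 1) := by
  have : 0 ≤ t ^ 5 * ((u - t ^ 2) * (t ^ 3 - u)) := by
    have : 0 ≤ (u - t ^ 2) * (t ^ 3 - u) := mul_nonneg (by linarith) (by linarith)
    positivity
  nlinarith [pow_le_pow_right₀ ht (show 3 ≤ 5 by norm_num),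
    mul_nonneg (show 0 ≤ t ^ 7 + 1 by positivity) (show 0 ≤ t ^ 3 - u by linarith)]

lemma exists_delta_sum_sq_eq (ht : 1 ≤ t) (htu : t ^ 2 ≤ u) (hut : u ≤ t ^ 3) :
    ∃ δ, 0 ≤ δ ∧ δ ≤ 1 / t ^ 4 ∧
      (t ^ 8 * δ) ^ 2 + (t ^ 4 * √(1 - δ ^ 2) / u) ^ 2 + (u * √(1 - δ ^ 2)) ^ 2 + (δ / t ^ 4) ^ 2
        = (t ^ 4) ^ 2 + 1 := by
  have ht8 : 0 < t ^ 8 := by positivity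
  have hu0 : 0 < u := by nlinarith
  have hN : 0 ≤ t ^ 8 * (u ^ 2 - 1) * (t ^ 8 - u ^ 2) := by
    have hu1 : 1 ≤ u ^ 2 := by nlinarith
    have hu8 : u ^ 2 ≤ t ^ 8 := by nlinarith [pow_le_pow_right₀ ht (show 3 ≤ 4 by norm_num)]
    exact mul_nonneg (mul_nonneg ht8.le (sub_nonneg.mpr hu1)) (sub_nonneg.mpr hu8)
  have hND : t ^ 8 * (t ^ 8 * (u ^ 2 - 1) * (t ^ 8 - u ^ 2)) ≤
      u ^ 2 * t ^ 24 + u ^ 2 - t ^ 16 - u ^ 4 * t ^ 8 := by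
    have h8 : 1 ≤ t ^ 8 := one_le_pow₀ ht
    have hQ : 0 ≤ u ^ 4 * t ^ 8 - u ^ 2 * (t ^ 8 + 1) + t ^ 16 := by
      nlinarith [sq_nonneg (u ^ 2 * t ^ 4 - t ^ 8), mul_le_mul_of_nonneg_left
        (show t ^ 8 + 1 ≤ 2 * t ^ 12 by nlinarith [one_le_pow₀ (n := 4) ht]) (sq_nonneg u)]
    nlinarith [mul_nonneg (sub_nonneg.mpr h8) hQ]
  set N := t ^ 8 * (u ^ 2 - 1) * (t ^ 8 - u ^ 2)
  set D := u ^ 2 * t ^ 24 + u ^ 2 - t ^ 16 - u ^ 4 * t ^ 8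
  have hD : 0 ≤ D := le_trans (by positivity) hND
  have hδt : N / D ≤ (1 / t ^ 4) ^ 2 := by
    refine div_le_of_le_mul₀ hD (by positivity) ?_
    rw [div_pow, one_pow, ← pow_mul, div_mul_eq_mul_div, one_mul, le_div_iff₀ ht8]
    linarith
  have ht4 : 1 / t ^ 4 ≤ 1 := by
    rw [div_le_one (by positivity)]; exact one_le_pow₀ ht
  have hδ1 : N / D ≤ 1 := hδt.trans (pow_le_one₀ (by positivity) ht4)
  -- `D = 0` happens (for `t = 1`), but then `N = 0` by `hND`.
  have hδD : N / D * D = N := div_mul_cancel_of_imp fun h => by nlinarith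
  refine ⟨√(N / D), sqrt_nonneg _, ?_, ?_⟩
  · rw [← sqrt_sq (show 0 ≤ 1 / t ^ 4 by positivity)]
    exact sqrt_le_sqrt hδt
  · rw [mul_pow, div_pow, mul_pow, mul_pow, div_pow, sq_sqrt (div_nonneg hN hD),
      sq_sqrt (sub_nonneg.mpr hδ1)]
    generalize N / D = x at hδD
    simp only [N, D] at hδD
    field_simp
    linear_combination hδD

lemma sin_add_sin_le_two_div {φ ψ s : ℝ} (ht : 1 ≤ t) (htu : t ^ 2 ≤ u) (hut : u ≤ t ^ 3)
    (hs : s ≤ 1) (hφ : (t ^ 4 + 1) * sin φ = u * s + t ^ 4 * s / u)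
    (hψ : (t ^ 4 - 1) * sin ψ = u * s - t ^ 4 * s / u) :
    sin φ + sin ψ ≤ 2 / t := by
  rcases ht.eq_or_lt with rfl | ht1
  · linarith [sin_le_one φ, sin_le_one ψ]
  have hu0 : 0 < u := by nlinarith
  have ht8 : 0 < t ^ 8 - 1 := by linarith [one_lt_pow₀ ht1 (show 8 ≠ 0 by norm_num)]
  have key : u * (t ^ 8 - 1) * (sin φ + sin ψ) = 2 * t ^ 4 * s * (u ^ 2 - 1) := by
    have hu : u * (t ^ 4 * s / u) = t ^ 4 * s := mul_div_cancel₀ _ hu0.ne'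
    linear_combination u * (t ^ 4 - 1) * hφ + u * (t ^ 4 + 1) * hψ - 2 * hu
  have hu1 : 0 ≤ t ^ 5 * (u ^ 2 - 1) := by
    have : 0 ≤ u ^ 2 - 1 := by nlinarith
    positivity
  rw [le_div_iff₀ (by positivity)]
  refine le_of_mul_le_mul_left ?_ (show 0 < u * (t ^ 8 - 1) by positivity)
  calc u * (t ^ 8 - 1) * ((sin φ + sin ψ) * t) = 2 * (t ^ 5 * (u ^ 2 - 1) * s) := by
        linear_combination t * key
    _ ≤ 2 * (u * (t ^ 8 - 1)) := by
        nlinarith [mul_le_mul_of_nonneg_left hs hu1, pow_five_mul_sq_sub_one_le ht htu hut]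
    _ = u * (t ^ 8 - 1) * 2 := by ring

end

theorem exists_delta_rotU_decomposition {t u : ℝ} (S : ℝ) (ht : 1 ≤ t) (htu : t ^ 2 ≤ u)
    (hut : u ≤ t ^ 3) :
    ∃ δ, 0 ≤ δ ∧ δ ≤ 1 / t ^ 4 ∧ ∃ θ θ' : ℝ,
      !![t ^ 8 * δ, -(t ^ 4 * √(1 - δ ^ 2) / u), 0; u * √(1 - δ ^ 2), δ / t ^ 4, 0; 0, 0, S] =
        rotU θ * diagonal ![t ^ 4, 1, S] * rotU θ' ∧
      opNorm3 (rotU θ - 1) ≤ 2 / t ∧ opNorm3 (rotU θ' - 1) ≤ 2 / t := by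
  obtain ⟨δ, hδ0, hδt, hfrob⟩ := exists_delta_sum_sq_eq ht htu hut
  have ht0 : 0 < t := by linarith
  have hu0 : 0 < u := by nlinarith
  have ht4 : 1 ≤ t ^ 4 := one_le_pow₀ ht
  have hδ1 : δ ≤ 1 := hδt.trans (div_le_one_of_le₀ ht4 (by positivity))
  set s := √(1 - δ ^ 2)
  have hs : s ^ 2 = 1 - δ ^ 2 := sq_sqrt (by nlinarith)
  have hs0 : 0 ≤ s := sqrt_nonneg _
  have hda : |δ / t ^ 4| ≤ t ^ 8 * δ := by
    rw [abs_of_nonneg (by positivity), div_le_iff₀ (by positivity)]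
    nlinarith [one_le_pow₀ (n := 12) ht]
  have hbc : |t ^ 4 * s / u| ≤ u * s := by
    rw [abs_of_nonneg (by positivity), div_le_iff₀ hu0]
    nlinarith [pow_le_pow_left₀ (by positivity) htu 2]
  have hdet : t ^ 8 * δ * (δ / t ^ 4) + t ^ 4 * s / u * (u * s) = t ^ 4 := by
    field_simp
    linear_combination hs
  obtain ⟨φ, hφ, ψ, hψ, hdecomp, hsinφ, hsinψ⟩ :=
    exists_rotU_mul_diagonal_mul_rotU S ht4 hda hbc hdet hfrob
  have hsum := sin_add_sin_le_two_div ht htu hut (sqrt_le_one.mpr (by nlinarith)) hsinφ hsinψ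
  have hnorm {θ : ℝ} (hθ : |θ| ≤ (φ + ψ) / 2) : opNorm3 (rotU θ - 1) ≤ 2 / t :=
    (opNorm3_rotU_sub_one_le_sin_add_sin hφ hψ hθ).trans hsum
  refine ⟨δ, hδ0, hδt, _, _, hdecomp.symm, hnorm ?_, hnorm ?_⟩ <;>
    rw [abs_le] <;> constructor <;> linarith [hφ.1, hψ.1]

theorem stmt14_general (γ : ℝ) (α : ℝ) (hα1 : γ ≤ α) (hα2 : α ≤ 7 * γ / 6) :
    ∃ δ : ℝ, 0 ≤ δ ∧ δ ≤ 1 ∧ ∃ θ θ' : ℝ,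
      Dmat (2 * γ - α) * xmat δ * Dmat α
        = rotU θ * Matrix.diagonal ![exp γ, 1, exp (-γ)] * rotU θ' ∧
      δ ≤ exp (-γ) ∧
      opNorm3 (rotU θ - 1) ≤ 2 * exp (-γ / 4) ∧
      opNorm3 (rotU θ' - 1) ≤ 2 * exp (-γ / 4) := by
  set t := exp (γ / 4)
  set u := exp (3 * α / 2 - γ)
  have hpow (k : ℕ) : exp (k * (γ / 4)) = t ^ k := exp_nat_mul _ _
  have ht : 1 ≤ t := one_le_exp (by linarith)
  have htu : t ^ 2 ≤ u := by rw [← hpow, exp_le_exp]; push_cast; linarith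
  have hut : u ≤ t ^ 3 := by rw [← hpow, exp_le_exp]; push_cast; linarith
  have hγ : exp γ = t ^ 4 := by rw [← hpow]; push_cast; ring_nf
  have hγ' : exp (-γ) = 1 / t ^ 4 := by rw [exp_neg, hγ, one_div]
  obtain ⟨δ, hδ0, hδt, θ, θ', hdecomp, hk, hk'⟩ :=
    exists_delta_rotU_decomposition (exp (-γ)) ht htu hut
  have h2t : 2 * exp (-γ / 4) = 2 / t := by rw [neg_div, exp_neg, div_eq_mul_inv 2 t]
  have hδ1 : δ ≤ 1 := hδt.trans (div_le_one_of_le₀ (one_le_pow₀ ht) (by positivity))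
  refine ⟨δ, hδ0, hδ1, θ, θ', ?_, hγ' ▸ hδt, h2t ▸ hk, h2t ▸ hk'⟩
  have e₁ : exp (2 * γ - α + α) = t ^ 8 := by rw [← hpow]; push_cast; ring_nf
  have e₂ : exp (2 * γ - α - α / 2) = t ^ 4 / u := by
    rw [eq_div_iff (exp_pos _).ne', ← hpow, ← exp_add]; push_cast; ring_nf
  have e₃ : exp (α - (2 * γ - α) / 2) = u := by congr 1; ring
  have e₄ : exp (-(2 * γ - α + α) / 2) = exp (-γ) := by congr 1; ring
  rw [Dmat_mul_xmat_mul_Dmat, hγ, ← hdecomp, e₁, e₂, e₃, e₄, hγ', div_mul_eq_mul_div,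
    div_mul_eq_mul_div, one_mul]

/-- for `γ ≥ 0` and `α ∈ [γ, 7γ/6]` there exist `δ ∈ [0,1]` and block
rotations `k = diag(R,1)`, `k' = diag(R',1)` with
`D_{2γ−α} x_δ D_α = k · diag(e^γ, 1, e^{−γ}) · k'`, `δ ≤ e^{−γ}`, `‖k − I‖ ≤ 2e^{−γ/4}`
and `‖k' − I‖ ≤ 2e^{−γ/4}`. -/
theorem stmt14 (γ : ℝ) (hγ : 0 ≤ γ) (α : ℝ) (hα1 : γ ≤ α) (hα2 : α ≤ 7 * γ / 6) :
    ∃ δ : ℝ, 0 ≤ δ ∧ δ ≤ 1 ∧ ∃ θ θ' : ℝ,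
      Dmat (2 * γ - α) * xmat δ * Dmat α
        = rotU θ * Matrix.diagonal ![exp γ, 1, exp (-γ)] * rotU θ' ∧
      δ ≤ exp (-γ) ∧
      opNorm3 (rotU θ - 1) ≤ 2 * exp (-γ / 4) ∧
      opNorm3 (rotU θ' - 1) ≤ 2 * exp (-γ / 4) :=
  stmt14_general γ α hα1 hα2
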